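/- Let d ≥ 1, let γ₁, …, γ_d be fixed real parameters defining the exponential time encoding T_e, let a₁, …, a_d be real coefficients defining the composite exponential dependency κ, and let W be a real d×d matrix. Let Δt₁ and Δt₂ be real time intervals and set Δt = Δt₁ + Δt₂. Then there exists a real d×d matrix W₁ such that for every row vector x ∈ ℝ^d, (x ⊙ T_e(Δt₁) ⊙ T_e(Δt₂)) W₁ = κ(Δt) · (x W), i.e., the decoupled two-stage computation (element-wise encoding of the two sub-intervals during preprocessing, followed by a single linear transformation) reproduces composite exponential message passing over the full interval for all input features simultaneously. -/

import Mathlib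

/-!
The encodings of the two sub-intervals multiply to the encoding of the whole interval,
`T_e(Δt₁) ⊙ T_e(Δt₂) = T_e(Δt)`, whose entries are nonzero. So the diagonal matrix of
reciprocals `diag(T_e(Δt))⁻¹` undoes the element-wise encoding, and
`W₁ = κ(Δt) • diag(T_e(Δt))⁻¹ W` works.
-/

/-- Exponential time encoding: `T_e(Δt) = [e^{γ₁ Δt}, …, e^{γ_d Δt}]`. -/
noncomputable def expTimeEncoding {d : ℕ} (γ : Fin d → ℝ) (Δt : ℝ) : Fin d → ℝ :=
  fun i => Real.exp (γ i * Δt)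

/-- Composite exponential dependency: `κ(Δt) = ∑ i, a_i e^{γ_i Δt}`. -/
noncomputable def compositeExpDependency {d : ℕ} (γ a : Fin d → ℝ) (Δt : ℝ) : ℝ :=
  ∑ i, a i * Real.exp (γ i * Δt)

open Matrix in
theorem Matrix.vecMul_mul_diagonal_inv_mul {ι ι' K : Type*} [Fintype ι] [DecidableEq ι]
    [Field K] {v : ι → K} (hv : ∀ i, v i ≠ 0) (x : ι → K) (M : Matrix ι ι' K) :
    (x * v) ᵥ* (diagonal v⁻¹ * M) = x ᵥ* M := by
  have hundo : (x * v) ᵥ* diagonal v⁻¹ = x := by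
    ext i
    simp [vecMul_diagonal, hv i]
  rw [← vecMul_vecMul, hundo]

theorem expTimeEncoding_add {d : ℕ} (γ : Fin d → ℝ) (s t : ℝ) :
    expTimeEncoding γ (s + t) = expTimeEncoding γ s * expTimeEncoding γ t := by
  ext i
  simp only [expTimeEncoding, Pi.mul_apply, mul_add, Real.exp_add]

theorem expTimeEncoding_ne_zero {d : ℕ} (γ : Fin d → ℝ) (t : ℝ) (i : Fin d) :
    expTimeEncoding γ t i ≠ 0 :=
  Real.exp_ne_zero _

theorem decoupled_CE_message_passing_general {d : ℕ}
    (γ a : Fin d → ℝ) (W : Matrix (Fin d) (Fin d) ℝ) (Δt₁ Δt₂ : ℝ) :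
    ∃ W₁ : Matrix (Fin d) (Fin d) ℝ, ∀ x : Fin d → ℝ,
      Matrix.vecMul (x * expTimeEncoding γ Δt₁ * expTimeEncoding γ Δt₂) W₁ =
        compositeExpDependency γ a (Δt₁ + Δt₂) • Matrix.vecMul x W := by
  refine ⟨Matrix.diagonal (expTimeEncoding γ (Δt₁ + Δt₂))⁻¹ *
    (compositeExpDependency γ a (Δt₁ + Δt₂) • W), fun x => ?_⟩
  rw [mul_assoc, ← expTimeEncoding_add,
    Matrix.vecMul_mul_diagonal_inv_mul (expTimeEncoding_ne_zero γ _), Matrix.vecMul_smul]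

/-- There is a matrix `W₁` such that for every row vector `x`,
`(x ⊙ T_e(Δt₁) ⊙ T_e(Δt₂)) W₁ = κ(Δt₁ + Δt₂) · (x W)`:
the decoupled two-stage computation reproduces composite exponential message
passing over the full interval, simultaneously for all inputs. -/
theorem decoupled_CE_message_passing {d : ℕ} (hd : 1 ≤ d)
    (γ a : Fin d → ℝ) (W : Matrix (Fin d) (Fin d) ℝ) (Δt₁ Δt₂ : ℝ) :
    ∃ W₁ : Matrix (Fin d) (Fin d) ℝ, ∀ x : Fin d → ℝ,
      Matrix.vecMul (x * expTimeEncoding γ Δt₁ * expTimeEncoding γ Δt₂) W₁ =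
        compositeExpDependency γ a (Δt₁ + Δt₂) • Matrix.vecMul x W :=
  decoupled_CE_message_passing_general γ a W Δt₁ Δt₂
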